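/- arXiv:1701.00104 — 4 statements merged into one kernel-verified Lean document; each statement's English description precedes it below -/
import Mathlib

section
/- In Scenario A (challenges sampled without replacement within a challenge), for every k ≥ 1 and every i with m ≤ i ≤ n, the probability that exactly i distinct password positions are known after k challenge–response pairs satisfies the recurrence p_k(X = i) = (1 / C(n,m)) · Σ_{j=0}^{m} C(i−j, m−j) · C(n−(i−j), j) · p_{k−1}(X = i−j). -/
/-! Condition on the first challenge `S` and on the union `U` of the other `k - 1`, of size `u`.
Since `|S ∪ U| = u + |S \ U|`, the union has `i` elements exactly when `|S \ U| = j` and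
`u = i - j` for some `j ≤ m`; and the `m`-subsets `S` with `|S \ U| = j` number
`C(u, m - j) · C(n - u, j)`, as `S ∩ U` and `S \ U` can be chosen independently. Dividing the
resulting recurrence for the counts by `C(n, m) ^ k` gives the one for the probabilities. -/

/-- Scenario A: `k` i.i.d. challenges, each uniform over the `C(n,m)` subsets of
cardinality `m` of the `n`-element set of password positions (`Fin n`).
`pA n m k i` is the probability that the union of the `k` challenges has exactly
`i` elements, computed as a ratio of counts over the uniform finite sample space. -/
noncomputable def pA (n m k i : ℕ) : ℝ :=
  ((Finset.univ.filter fun f : Fin k → {S : Finset (Fin n) // S.card = m} =>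
      (Finset.univ.biUnion fun t => (f t).1).card = i).card : ℝ) /
    (Fintype.card (Fin k → {S : Finset (Fin n) // S.card = m}) : ℝ)

open Finset

variable {α : Type*} [DecidableEq α]

theorem card_filter_powersetCard_card_sdiff (s T : Finset α) {m j : ℕ} (hj : j ≤ m) :
    #{S ∈ powersetCard m s | #(S \ T) = j} =
      (#(s ∩ T)).choose (m - j) * (#(s \ T)).choose j := by
  have split_union {A B : Finset α} (hA : A ⊆ T) (hB : Disjoint B T) :
      (A ∪ B) ∩ T = A ∧ (A ∪ B) \ T = B := by
    rw [union_inter_distrib_right, inter_eq_left.2 hA, disjoint_iff_inter_eq_empty.1 hB,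
      union_empty, union_sdiff_distrib, sdiff_eq_empty_iff_subset.2 hA, empty_union,
      sdiff_eq_self_of_disjoint hB]
    exact ⟨rfl, rfl⟩
  rw [← card_powersetCard, ← card_powersetCard, ← card_product]
  refine card_nbij' (fun S => (S ∩ T, S \ T)) (fun p => p.1 ∪ p.2) ?_ ?_ ?_ ?_
  · intro S
    simp only [mem_coe, mem_filter, mem_product, mem_powersetCard]
    rintro ⟨⟨hSs, hSm⟩, hSj⟩
    have := card_sdiff_add_card_inter S T
    exact ⟨⟨inter_subset_inter_right hSs, by omega⟩, sdiff_subset_sdiff hSs subset_rfl, hSj⟩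
  · rintro ⟨A, B⟩
    simp only [mem_coe, mem_filter, mem_product, mem_powersetCard]
    rintro ⟨⟨hA, hAc⟩, hB, hBc⟩
    have hBT : Disjoint B T := disjoint_of_subset_left hB disjoint_sdiff_self_left
    have hAB : Disjoint A B := disjoint_of_subset_left (hA.trans inter_subset_right) hBT.symm
    refine ⟨⟨union_subset (hA.trans inter_subset_left) (hB.trans sdiff_subset), ?_⟩, ?_⟩
    · rw [card_union_of_disjoint hAB]
      omega
    · rw [(split_union (hA.trans inter_subset_right) hBT).2, hBc]
  · intro S _
    exact sup_inf_sdiff S T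
  · rintro ⟨A, B⟩
    simp only [mem_coe, mem_product, mem_powersetCard, Prod.mk.injEq]
    rintro ⟨⟨hA, -⟩, hB, -⟩
    exact split_union (hA.trans inter_subset_right)
      (disjoint_of_subset_left hB disjoint_sdiff_self_left)

def revealed {m k : ℕ} (f : Fin k → {S : Finset α // #S = m}) : Finset α :=
  univ.biUnion fun t => (f t).1

theorem revealed_cons {m k : ℕ} (S : {S : Finset α // #S = m})
    (f : Fin k → {S : Finset α // #S = m}) :
    revealed (Fin.cons S f : Fin (k + 1) → _) = S.1 ∪ revealed f := by
  ext x
  simp [revealed, Fin.exists_fin_succ]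

section Fintype

variable [Fintype α]

theorem card_filter_card_sdiff_eq (T : Finset α) {m j : ℕ} (hj : j ≤ m) :
    #{S : {S : Finset α // #S = m} | #(S.1 \ T) = j} =
      (#T).choose (m - j) * (Fintype.card α - #T).choose j := by
  have h := card_filter_powersetCard_card_sdiff univ T hj
  rw [univ_inter, ← compl_eq_univ_sdiff, card_compl] at h
  rw [← h]
  exact card_bij (fun S _ => S.1) (by simp +contextual) (fun _ _ _ _ => Subtype.ext)
    (by simp +contextual)

theorem card_filter_card_union_eq_sum (T : Finset α) {m i : ℕ} (hmi : m ≤ i) :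
    #{S : {S : Finset α // #S = m} | #(S.1 ∪ T) = i} =
      ∑ j ∈ range (m + 1), if #T = i - j then
        (i - j).choose (m - j) * (Fintype.card α - (i - j)).choose j else 0 := by
  have hmaps : ∀ S : {S : Finset α // #S = m}, #(S.1 \ T) ∈ range (m + 1) :=
    fun S => mem_range_succ_iff.2 ((card_le_card sdiff_subset).trans S.2.le)
  rw [card_eq_sum_card_fiberwise fun S _ => hmaps S]
  refine sum_congr rfl fun j hj => ?_
  have hjm : j ≤ m := mem_range_succ_iff.1 hj
  -- `#(S ∪ T) = #T + j`, and `j ≤ m ≤ i` makes `#T + j = i` equivalent to `#T = i - j`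
  rw [filter_filter]
  split_ifs with hT
  · rw [← hT, ← card_filter_card_sdiff_eq T hjm]
    congr 1
    ext S
    simp only [mem_filter, mem_univ, true_and, ← card_sdiff_add_card]
    omega
  · rw [card_eq_zero, filter_eq_empty_iff]
    intro S _
    rw [← card_sdiff_add_card]
    omega

variable (α) in
def revealedCount (m k i : ℕ) : ℕ :=
  #{f : Fin k → {S : Finset α // #S = m} | #(revealed f) = i}

theorem revealedCount_succ {m i : ℕ} (k : ℕ) (hmi : m ≤ i) :
    revealedCount α m (k + 1) i = ∑ j ∈ range (m + 1),
      (i - j).choose (m - j) * (Fintype.card α - (i - j)).choose j *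
        revealedCount α m k (i - j) := by
  calc revealedCount α m (k + 1) i
      = ∑ f : Fin k → {S : Finset α // #S = m},
          #{S : {S : Finset α // #S = m} | #(S.1 ∪ revealed f) = i} := by
        rw [revealedCount, card_filter, ← (Fin.consEquiv fun _ => _).sum_comp,
          Fintype.sum_prod_type, sum_comm]
        simp only [Fin.consEquiv, Equiv.coe_fn_mk, revealed_cons, card_filter]
    _ = ∑ f : Fin k → {S : Finset α // #S = m}, ∑ j ∈ range (m + 1),
          if #(revealed f) = i - j then
            (i - j).choose (m - j) * (Fintype.card α - (i - j)).choose j else 0 := by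
        simp only [card_filter_card_union_eq_sum _ hmi]
    _ = _ := by
        rw [sum_comm]
        refine sum_congr rfl fun j _ => ?_
        rw [← sum_filter, sum_const, smul_eq_mul, mul_comm]
        rfl

end Fintype

theorem pA_eq_revealedCount_div (n m k i : ℕ) :
    pA n m k i = revealedCount (Fin n) m k i / (n.choose m : ℝ) ^ k := by
  rw [pA, Fintype.card_fun, Fintype.card_finset_len, Fintype.card_fin, Fintype.card_fin]
  push_cast
  rfl

theorem scenarioA_recurrence_general (n m : ℕ)
    (k : ℕ) (hk : 1 ≤ k) (i : ℕ) (hmi : m ≤ i) :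
    pA n m k i =
      (1 / (n.choose m : ℝ)) *
        ∑ j ∈ Finset.range (m + 1),
          ((i - j).choose (m - j) : ℝ) * ((n - (i - j)).choose j : ℝ) *
            pA n m (k - 1) (i - j) := by
  obtain ⟨k, rfl⟩ := Nat.exists_eq_add_of_le' hk
  rw [Nat.add_sub_cancel, pA_eq_revealedCount_div, revealedCount_succ k hmi, Fintype.card_fin]
  push_cast
  rw [sum_div, mul_sum]
  refine sum_congr rfl fun j _ => ?_
  rw [pA_eq_revealedCount_div]
  ring

/-- Scenario A recurrence: for `1 ≤ m ≤ n`, `k ≥ 1` and `m ≤ i ≤ n`,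
`p_k(X = i) = (1 / C(n,m)) · Σ_{j=0}^{m} C(i-j, m-j) · C(n-(i-j), j) · p_{k-1}(X = i-j)`. -/
theorem scenarioA_recurrence (n m : ℕ) (hm : 1 ≤ m) (hmn : m ≤ n)
    (k : ℕ) (hk : 1 ≤ k) (i : ℕ) (hmi : m ≤ i) (hin : i ≤ n) :
    pA n m k i =
      (1 / (n.choose m : ℝ)) *
        ∑ j ∈ Finset.range (m + 1),
          ((i - j).choose (m - j) : ℝ) * ((n - (i - j)).choose j : ℝ) *
            pA n m (k - 1) (i - j) :=
  scenarioA_recurrence_general n m k hk i hmi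
end

section
/- Law of total probability for the next challenge in Scenario B: the probability that every element of the (k+1)-st challenge multiset T_{k+1} lies in the set of positions already revealed by the first k challenges (the union of the supports of T_1, …, T_k) equals E^B_k = Σ_{i=1}^{n} p_k(X = i) · C(i+m−1, m) / C(n+m−1, m). -/
lemma sym_subset_card (n m : ℕ) (S : Finset (Fin n)) :
    (Finset.univ.filter fun t : Sym (Fin n) m => t.toMultiset.toFinset ⊆ S).card
      = (S.card + m - 1).choose m := by
  have h : Fintype.card (Sym {x // x ∈ S} m) = (S.card + m - 1).choose m := by
    rw [Sym.card_sym_eq_choose, Fintype.card_coe]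
  rw [← h, ← Finset.card_univ]
  symm
  apply Finset.card_bij (fun (t : Sym {x // x ∈ S} m) _ => Sym.map Subtype.val t)
  · intro t _
    simp only [Finset.mem_filter, Finset.mem_univ, true_and]
    intro x hx
    simp only [Multiset.mem_toFinset, Sym.mem_coe] at hx
    rcases Sym.mem_map.mp hx with ⟨y, _, rfl⟩
    exact y.2
  · intro a _ b _ hab
    exact Sym.map_injective Subtype.val_injective _ hab
  · intro t ht
    have ht' := (Finset.mem_filter.mp ht).2
    refine ⟨⟨t.1.attach.map (fun x => (⟨x.1,
        ht' (Multiset.mem_toFinset.mpr x.2)⟩ : {x // x ∈ S})), by simp [t.2]⟩,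
      Finset.mem_univ _, ?_⟩
    apply Subtype.ext
    simp [Sym.map, Multiset.map_map]


/-- Scenario B: `k` i.i.d. challenges, each uniform over the `C(n+m-1,m)` multisets of
cardinality `m` with elements from the `n`-element set of password positions (`Fin n`).
`pB n m k i` is the probability that the union of the supports of the `k` challenges
has exactly `i` elements, computed over the uniform finite sample space. -/
noncomputable def pB (n m k i : ℕ) : ℝ :=
  ((Finset.univ.filter fun f : Fin k → Sym (Fin n) m =>
      (Finset.univ.biUnion fun t => (f t).toMultiset.toFinset).card = i).card : ℝ) /
    (Fintype.card (Fin k → Sym (Fin n) m) : ℝ)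

/-- Law of total probability for the next challenge in Scenario B: the probability
that every element of the `(k+1)`-st uniform challenge multiset lies in the union of
the supports of the first `k` challenges equals
`Σ_{i=1}^{n} p_k(X = i) · C(i+m-1,m) / C(n+m-1,m)`. The sample space is `k+1` i.i.d.
uniform multisets of cardinality `m`, the last one playing the role of `T_{k+1}`. -/
theorem nextChallengeTotalB (n m k : ℕ) (hm : 1 ≤ m) (hmn : m ≤ n) :
    ((Finset.univ.filter
        fun fT : (Fin k → Sym (Fin n) m) × Sym (Fin n) m =>
          fT.2.toMultiset.toFinset ⊆
            Finset.univ.biUnion fun t => (fT.1 t).toMultiset.toFinset).card : ℝ) /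
      (Fintype.card ((Fin k → Sym (Fin n) m) × Sym (Fin n) m) : ℝ) =
    ∑ i ∈ Finset.Icc 1 n,
      pB n m k i * ((i + m - 1).choose m : ℝ) / ((n + m - 1).choose m : ℝ) := by
  set U : (Fin k → Sym (Fin n) m) → Finset (Fin n) :=
    fun f => Finset.univ.biUnion fun t => (f t).toMultiset.toFinset with hU
  set Nf : ℕ → ℕ := fun i =>
    (Finset.univ.filter fun f : Fin k → Sym (Fin n) m => (U f).card = i).card with hNf
  have hn : 1 ≤ n := hm.trans hmn
  -- numerator counting
  have step1 : (Finset.univ.filter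
      fun fT : (Fin k → Sym (Fin n) m) × Sym (Fin n) m =>
        fT.2.toMultiset.toFinset ⊆ U fT.1).card
      = ∑ f : Fin k → Sym (Fin n) m, ((U f).card + m - 1).choose m := by
    rw [Finset.card_eq_sum_card_fiberwise
      (f := Prod.fst) (t := Finset.univ) (fun _ _ => Finset.mem_univ _)]
    refine Finset.sum_congr rfl fun f _ => ?_
    rw [← sym_subset_card n m (U f)]
    apply Finset.card_bij (fun p _ => p.2)
    · intro p hp
      simp only [Finset.mem_filter, Finset.mem_univ, true_and] at hp ⊢
      rw [← hp.2]
      exact hp.1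
    · intro a ha b hb hab
      simp only [Finset.mem_filter] at ha hb
      exact Prod.ext (ha.2.trans hb.2.symm) hab
    · intro t ht
      simp only [Finset.mem_filter, Finset.mem_univ, true_and] at ht
      exact ⟨(f, t), by simp [ht], rfl⟩
  have step2 : ∑ f : Fin k → Sym (Fin n) m, (((U f).card + m - 1).choose m : ℝ)
      = ∑ i ∈ Finset.range (n + 1), (Nf i : ℝ) * ((i + m - 1).choose m : ℝ) := by
    rw [← Finset.sum_fiberwise_of_maps_to
      (g := fun f => (U f).card) (t := Finset.range (n + 1))
      (fun f _ => Finset.mem_range.mpr (Nat.lt_succ_of_le (by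
        have := Finset.card_le_univ (U f); simpa using this)))
      (fun f => (((U f).card + m - 1).choose m : ℝ))]
    refine Finset.sum_congr rfl fun i _ => ?_
    rw [Finset.sum_congr rfl (fun f hf => by
      rw [(Finset.mem_filter.mp hf).2]), Finset.sum_const, nsmul_eq_mul]
  have hC : (0:ℝ) < ((n + m - 1).choose m : ℕ) := by
    exact_mod_cast Nat.choose_pos (by omega)
  have hne : Nonempty (Sym (Fin n) m) := ⟨Sym.replicate m ⟨0, hn⟩⟩
  have hD1 : (0:ℝ) < (Fintype.card (Fin k → Sym (Fin n) m) : ℕ) := by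
    exact_mod_cast Fintype.card_pos
  have hprod : (Fintype.card ((Fin k → Sym (Fin n) m) × Sym (Fin n) m) : ℝ)
      = (Fintype.card (Fin k → Sym (Fin n) m) : ℝ) * ((n + m - 1).choose m : ℝ) := by
    rw [Fintype.card_prod, Sym.card_sym_eq_choose, Fintype.card_fin]
    push_cast; ring
  rw [hprod, step1]
  push_cast
  rw [step2]
  have hIcc : Finset.range (n + 1) = insert 0 (Finset.Icc 1 n) := by
    ext x; simp [Finset.mem_Icc, Nat.lt_succ_iff]; omega
  rw [hIcc, Finset.sum_div, Finset.sum_insert (by simp)]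
  have h0 : (Nf 0 : ℝ) * ((0 + m - 1).choose m : ℝ) /
      ((Fintype.card (Fin k → Sym (Fin n) m) : ℝ) * ((n + m - 1).choose m : ℝ)) = 0 := by
    rw [Nat.choose_eq_zero_of_lt (by omega)]
    simp
  rw [h0, zero_add]
  refine Finset.sum_congr rfl fun i _ => ?_
  rw [pB]
  field_simp
  try ring
end

section
/- In Scenario A with password length n = 12 and challenges of size m = 3, the probability of having recovered the full password after recording 14 challenge–response pairs is at least 75%: p_14(X = 12) ≥ 0.75. -/
open Finset in
private abbrev α12 := {S : Finset (Fin 12) // S.card = 3}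

open Finset in
private lemma card_α12 : Fintype.card α12 = 220 := by
  rw [Fintype.card_subtype]
  have : univ.filter (fun S : Finset (Fin 12) => S.card = 3) = univ.powersetCard 3 := by
    ext S; simp [mem_powersetCard]
  rw [this, card_powersetCard, card_univ]
  decide

open Finset in
private lemma card_avoid (x : Fin 12) : Fintype.card {S : α12 // x ∉ S.1} = 165 := by
  rw [Fintype.card_congr (Equiv.subtypeSubtypeEquivSubtypeInter
    (fun S : Finset (Fin 12) => S.card = 3) (fun S => x ∉ S))]
  rw [Fintype.card_subtype]
  have : univ.filter (fun S : Finset (Fin 12) => S.card = 3 ∧ x ∉ S)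
      = (univ.erase x).powersetCard 3 := by
    ext S; simp [mem_powersetCard, subset_erase, and_comm]
  rw [this, card_powersetCard, card_erase_of_mem (mem_univ x), card_univ]
  decide

open Finset in
private lemma card_avoid_fun (x : Fin 12) :
    (univ.filter fun f : Fin 14 → α12 => ∀ t, x ∉ (f t).1).card = 165 ^ 14 := by
  rw [← Fintype.card_subtype]
  rw [Fintype.card_congr
    (Equiv.subtypePiEquivPi (β := fun _ : Fin 14 => α12) (p := fun _ S => x ∉ S.1))]
  rw [Fintype.card_pi]
  simp [card_avoid x]

open Finset in
private lemma card_den : Fintype.card (Fin 14 → α12) = 220 ^ 14 := by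
  rw [Fintype.card_fun, card_α12, Fintype.card_fin]

open Finset in
set_option maxRecDepth 100000 in
private lemma bad_subset : (univ.filter fun f : Fin 14 → α12 =>
      ¬ (univ.biUnion fun t => (f t).1).card = 12) ⊆
    univ.biUnion fun x : Fin 12 =>
      univ.filter fun f : Fin 14 → α12 => ∀ t, x ∉ (f t).1 := by
  intro f hf
  rw [mem_filter] at hf
  have hne : (univ.biUnion fun t => (f t).1) ≠ univ := by
    intro h; exact hf.2 (by rw [h, card_univ, Fintype.card_fin])
  obtain ⟨x, -, hx⟩ := exists_of_ssubset (ssubset_univ_iff.mpr hne)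
  exact mem_biUnion.mpr ⟨x, mem_univ x, mem_filter.mpr ⟨mem_univ f,
    fun t ht => hx (mem_biUnion.mpr ⟨t, mem_univ t, ht⟩)⟩⟩

open Finset in
private lemma bad_card : (univ.filter fun f : Fin 14 → α12 =>
      ¬ (univ.biUnion fun t => (f t).1).card = 12).card ≤ 12 * 165 ^ 14 := by
  calc (univ.filter fun f : Fin 14 → α12 =>
        ¬ (univ.biUnion fun t => (f t).1).card = 12).card
      ≤ (univ.biUnion fun x : Fin 12 =>
        univ.filter fun f : Fin 14 → α12 => ∀ t, x ∉ (f t).1).card :=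
        card_le_card bad_subset
    _ ≤ ∑ x : Fin 12, (univ.filter fun f : Fin 14 → α12 => ∀ t, x ∉ (f t).1).card :=
        card_biUnion_le
    _ = 12 * 165 ^ 14 := by simp [card_avoid_fun]

open Finset in
set_option maxRecDepth 100000 in
private lemma cover_card : 220 ^ 14 ≤
    (univ.filter fun f : Fin 14 → α12 =>
      (univ.biUnion fun t => (f t).1).card = 12).card +
    (univ.filter fun f : Fin 14 → α12 =>
      ¬ (univ.biUnion fun t => (f t).1).card = 12).card := by
  have hcover : (univ : Finset (Fin 14 → α12)) ⊆
      (univ.filter fun f : Fin 14 → α12 =>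
        (univ.biUnion fun t => (f t).1).card = 12) ∪
      (univ.filter fun f : Fin 14 → α12 =>
        ¬ (univ.biUnion fun t => (f t).1).card = 12) := by
    intro f _
    by_cases h : (univ.biUnion fun t => (f t).1).card = 12
    · exact mem_union_left _ (mem_filter.mpr ⟨mem_univ f, h⟩)
    · exact mem_union_right _ (mem_filter.mpr ⟨mem_univ f, h⟩)
  calc (220:ℕ) ^ 14 = (univ : Finset (Fin 14 → α12)).card := by rw [card_univ, card_den]
    _ ≤ _ := le_trans (card_le_card hcover) (card_union_le _ _)

open Finset in
private lemma good_card : 220 ^ 14 - 12 * 165 ^ 14 ≤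
    (univ.filter fun f : Fin 14 → α12 =>
      (univ.biUnion fun t => (f t).1).card = 12).card := by
  exact Nat.sub_le_iff_le_add.mpr
    (cover_card.trans (Nat.add_le_add_left bad_card _))

open Finset in
/-- Scenario A with `n = 12`, `m = 3`: after recording 14 challenge–response pairs the
full password is recovered with probability at least 75%. -/
theorem scenarioA_n12_m3_k14 : pA 12 3 14 12 ≥ 0.75 := by
  have hcast : ((220 : ℝ) ^ 14 : ℝ) - 12 * 165 ^ 14 ≤
      ((univ.filter fun f : Fin 14 → α12 =>
        (univ.biUnion fun t => (f t).1).card = 12).card : ℝ) := by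
    have h12 : (12 * 165 ^ 14 : ℕ) ≤ 220 ^ 14 := by norm_num
    calc ((220 : ℝ) ^ 14 : ℝ) - 12 * 165 ^ 14
        = (((220 : ℕ) ^ 14 - 12 * 165 ^ 14 : ℕ) : ℝ) := by
          rw [Nat.cast_sub h12]; push_cast; ring
      _ ≤ _ := by exact_mod_cast good_card
  rw [pA, card_den, ge_iff_le, le_div_iff₀ (by positivity)]
  calc (0.75 : ℝ) * ((220 ^ 14 : ℕ) : ℝ) ≤ (220 : ℝ) ^ 14 - 12 * 165 ^ 14 := by
        push_cast; norm_num
    _ ≤ _ := hcast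
end

section
/- In Scenario B with password length n = 12 and challenges of size m = 3, the probability of having recovered the full password after recording 17 challenge–response pairs is at least 75%: p_17(X = 12) ≥ 0.75. -/
open Finset
set_option linter.constructorNameAsVariable false

lemma card_avoid' (x : Fin 12) :
    ((univ : Finset (Sym (Fin 12) 3)).filter (fun s => x ∉ s.toMultiset.toFinset)).card ≤ 286 := by
  have h : ((univ : Finset (Sym (Fin 12) 3)).filter (fun s => x ∉ s.toMultiset.toFinset)).card
      = Fintype.card {s : Sym (Fin 12) 3 // x ∉ s.toMultiset.toFinset} :=
    (Fintype.card_subtype _).symm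
  rw [h]
  have hinj : Function.Injective
      (fun s : {s : Sym (Fin 12) 3 // x ∉ s.toMultiset.toFinset} =>
        (Sym.map (fun y : {y // y ∈ s.1} =>
          (⟨y.1, fun e => s.2 (by rw [Multiset.mem_toFinset]; have h2 := y.2; rw [e] at h2; exact h2)⟩ : {y : Fin 12 // y ≠ x}))
          s.1.attach : Sym {y : Fin 12 // y ≠ x} 3)) := by
    intro a b hab
    have := congrArg (Sym.map (Subtype.val : {y : Fin 12 // y ≠ x} → Fin 12)) hab
    apply Subtype.ext
    simpa [Sym.map_map, Function.comp, Sym.attach_map_coe] using this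
  calc Fintype.card {s : Sym (Fin 12) 3 // x ∉ s.toMultiset.toFinset}
      ≤ Fintype.card (Sym {y : Fin 12 // y ≠ x} 3) := Fintype.card_le_of_injective _ hinj
    _ = 286 := by
        rw [Sym.card_sym_eq_multichoose]
        have : Fintype.card {y : Fin 12 // y ≠ x} = 11 := by
          simp [Fintype.card_subtype_compl (· = x)]
        rw [this, Nat.multichoose_eq]
        decide

lemma card_A' (x : Fin 12) :
    ((univ : Finset (Fin 17 → Sym (Fin 12) 3)).filter
      (fun f => ∀ t, x ∉ (f t).toMultiset.toFinset)).card ≤ 286 ^ 17 := by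
  have he : ((univ : Finset (Fin 17 → Sym (Fin 12) 3)).filter
      (fun f => ∀ t, x ∉ (f t).toMultiset.toFinset))
      = Fintype.piFinset (fun _ : Fin 17 =>
        (univ : Finset (Sym (Fin 12) 3)).filter (fun s => x ∉ s.toMultiset.toFinset)) := by
    ext f
    simp [Fintype.mem_piFinset]
  rw [he, Fintype.card_piFinset]
  calc ∏ _t : Fin 17, ((univ : Finset (Sym (Fin 12) 3)).filter
        (fun s => x ∉ s.toMultiset.toFinset)).card
      ≤ ∏ _t : Fin 17, 286 := Finset.prod_le_prod' (fun t _ => card_avoid' x)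
    _ = 286 ^ 17 := by simp

lemma total_card' : Fintype.card (Fin 17 → Sym (Fin 12) 3) = 364 ^ 17 := by
  rw [Fintype.card_fun, Sym.card_sym_eq_multichoose, Nat.multichoose_eq]
  norm_num [show Nat.choose 14 3 = 364 from by decide]

lemma good_card_ge' :
    364 ^ 17 - 12 * 286 ^ 17 ≤
    ((univ : Finset (Fin 17 → Sym (Fin 12) 3)).filter
      (fun f => (univ.biUnion fun t => (f t).toMultiset.toFinset).card = 12)).card := by
  have hsum : ((univ : Finset (Fin 17 → Sym (Fin 12) 3)).filter
      (fun f => (univ.biUnion fun t => (f t).toMultiset.toFinset).card = 12)).card +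
      ((univ : Finset (Fin 17 → Sym (Fin 12) 3)).filter
      (fun f => ¬ (univ.biUnion fun t => (f t).toMultiset.toFinset).card = 12)).card
      = 364 ^ 17 := by
    rw [Finset.filter_not, Finset.card_sdiff_of_subset (Finset.filter_subset _ _)]
    have h := Finset.card_filter_le (univ : Finset (Fin 17 → Sym (Fin 12) 3))
      (fun f => (univ.biUnion fun t => (f t).toMultiset.toFinset).card = 12)
    rw [Nat.add_sub_cancel' h, Finset.card_univ, total_card']
  have hbad : ((univ : Finset (Fin 17 → Sym (Fin 12) 3)).filter
      (fun f => ¬ (univ.biUnion fun t => (f t).toMultiset.toFinset).card = 12)).card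
      ≤ 12 * 286 ^ 17 := by
    have hsub : ((univ : Finset (Fin 17 → Sym (Fin 12) 3)).filter
        (fun f => ¬ (univ.biUnion fun t => (f t).toMultiset.toFinset).card = 12))
        ⊆ univ.biUnion (fun x : Fin 12 =>
        (univ : Finset (Fin 17 → Sym (Fin 12) 3)).filter
          (fun f => ∀ t, x ∉ (f t).toMultiset.toFinset)) := by
      rw [Finset.subset_iff]
      intro f hf
      simp only [Finset.mem_filter, Finset.mem_univ, true_and] at hf
      simp only [Finset.mem_biUnion, Finset.mem_filter, Finset.mem_univ, true_and]
      by_contra h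
      push_neg at h
      apply hf
      have huniv : (univ.biUnion fun t => (f t).toMultiset.toFinset) = univ := by
        apply Finset.eq_univ_iff_forall.mpr
        intro x
        obtain ⟨t, ht⟩ := h x
        exact Finset.mem_biUnion.mpr ⟨t, Finset.mem_univ t, ht⟩
      rw [huniv]
      simp
    calc ((univ : Finset (Fin 17 → Sym (Fin 12) 3)).filter
          (fun f => ¬ (univ.biUnion fun t => (f t).toMultiset.toFinset).card = 12)).card
        ≤ ∑ x : Fin 12, ((univ : Finset (Fin 17 → Sym (Fin 12) 3)).filter
          (fun f => ∀ t, x ∉ (f t).toMultiset.toFinset)).card :=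
        le_trans (Finset.card_le_card hsub) (Finset.card_biUnion_le)
      _ ≤ ∑ _x : Fin 12, 286 ^ 17 := Finset.sum_le_sum (fun x _ => card_A' x)
      _ = 12 * 286 ^ 17 := by simp [Finset.sum_const, mul_comm]
  have h1 := Nat.eq_sub_of_add_eq hsum
  rw [h1]
  exact Nat.sub_le_sub_left hbad _

/-- Scenario B with `n = 12`, `m = 3`: after recording 17 challenge–response pairs the
full password is recovered with probability at least 75%. -/
theorem scenarioB_n12_m3_k17 : pB 12 3 17 12 ≥ 0.75 := by
  unfold pB
  rw [total_card']
  have hle : 12 * 286 ^ 17 ≤ 364 ^ 17 := by norm_num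
  have hge : ((364 ^ 17 - 12 * 286 ^ 17 : ℕ) : ℝ) ≤
      (((univ : Finset (Fin 17 → Sym (Fin 12) 3)).filter
        (fun f => (univ.biUnion fun t => (f t).toMultiset.toFinset).card = 12)).card : ℝ) :=
    Nat.cast_le.mpr good_card_ge'
  rw [Nat.cast_sub hle] at hge
  rw [ge_iff_le, le_div_iff₀ (by positivity)]
  calc (0.75 : ℝ) * ((364 ^ 17 : ℕ) : ℝ)
      ≤ ((364 ^ 17 : ℕ) : ℝ) - ((12 * 286 ^ 17 : ℕ) : ℝ) := by push_cast; norm_num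
    _ ≤ _ := hge
end
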